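/- (Equivalent form of the claims of Example 3.4 of the paper, transported to the slit plane.) Let N = ℝ² ∖ {(0, t) : −1 ≤ t ≤ 1}, the Minkowski plane with a closed vertical segment removed. Then there is no future-directed timelike curve in N from (−1,−2) to (1,2), so d_N((−1,−2), (1,2)) = 0; yet every point p = (p₁, p₂) ∈ ℝ² with p₂ + |p₁ + 1| < −2 (equivalently, every point p with a future-directed timelike curve in N from p to (−1,−2)) satisfies d_N(p, (1,2)) ≥ 2√2. Consequently, d_N : N × N → [0,∞] is discontinuous at ((−1,−2), (1,2)). -/

import Mathlib

/-!
Along a future-directed timelike curve the null coordinate `t − x` strictly increases, so a curve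
from `(−1,−2)` to `(1,2)` would cross the axis `x = 0` at a time in `(−1, 1)`, i.e. on the slit.
A point `p` with `p₂ + |p₁ + 1| < −2` lies far enough in the past that a timelike broken line from
`p` can pass under the slit to a corner `(c, −1 − c)` just right of it and then go up to `(1,2)`;
the last leg alone has Lorentzian length `√(8 + 8c) ≥ 2√2`. Letting `p` tend to `(−1,−2)` gives
the discontinuity.
-/

open Set
open scoped ENNReal

/-- A vector of the Minkowski plane (first coordinate space, second coordinate time)
is future-directed timelike. -/
def FDTimelike (v : ℝ × ℝ) : Prop := |v.1| < v.2

/-- A future-directed timelike curve in `M ⊆ ℝ²` from `p` to `q`: a piecewise `C¹`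
map `γ : [0,1] → M` all of whose one-sided derivatives are future-directed timelike. -/
def IsTimelikeCurveIn (M : Set (ℝ × ℝ)) (γ : ℝ → ℝ × ℝ) (p q : ℝ × ℝ) : Prop :=
  γ 0 = p ∧ γ 1 = q ∧ (∀ s ∈ Set.Icc (0 : ℝ) 1, γ s ∈ M) ∧
  ∃ (m : ℕ) (t : ℕ → ℝ), 0 < m ∧ t 0 = 0 ∧ t m = 1 ∧ (∀ j < m, t j < t (j + 1)) ∧
    ∀ j < m,
      ContDiffOn ℝ 1 γ (Set.Icc (t j) (t (j + 1))) ∧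
      ∀ s ∈ Set.Icc (t j) (t (j + 1)),
        FDTimelike (derivWithin γ (Set.Icc (t j) (t (j + 1))) s)

/-- The Lorentzian length of a curve in the Minkowski plane. -/
noncomputable def Llen (γ : ℝ → ℝ × ℝ) : ℝ :=
  ∫ s in (0 : ℝ)..1, Real.sqrt ((deriv γ s).2 ^ 2 - (deriv γ s).1 ^ 2)

/-- The Lorentzian distance of `M ⊆ ℝ²`. -/
noncomputable def LorDist (M : Set (ℝ × ℝ)) (p q : ℝ × ℝ) : ℝ≥0∞ :=
  ⨆ (γ : ℝ → ℝ × ℝ) (_ : IsTimelikeCurveIn M γ p q), ENNReal.ofReal (Llen γ)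


/-- The Minkowski plane with the closed segment `{0} × [−1,1]` removed. -/
def Nslit : Set (ℝ × ℝ) := {p : ℝ × ℝ | ¬ (p.1 = 0 ∧ -1 ≤ p.2 ∧ p.2 ≤ 1)}

open Filter Topology AffineMap

lemma FDTimelike.sub_pos {v : ℝ × ℝ} (hv : FDTimelike v) : 0 < v.2 - v.1 :=
  _root_.sub_pos.2 ((le_abs_self _).trans_lt hv)

lemma FDTimelike.smul {v : ℝ × ℝ} (hv : FDTimelike v) {c : ℝ} (hc : 0 < c) :
    FDTimelike (c • v) := by
  simpa [FDTimelike, abs_mul, abs_of_pos hc] using mul_lt_mul_of_pos_left hv hc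

/-- The regularity condition imposed on each piece of a timelike curve. -/
def IsTimelikePieceOn (γ : ℝ → ℝ × ℝ) (I : Set ℝ) : Prop :=
  ContDiffOn ℝ 1 γ I ∧ ∀ s ∈ I, FDTimelike (derivWithin γ I s)

lemma isTimelikePieceOn_of_eqOn {γ g : ℝ → ℝ × ℝ} {w : ℝ × ℝ} {a b : ℝ} (hab : a < b)
    (hg : ∀ s, HasDerivAt g w s) (hw : FDTimelike w) (hγ : EqOn γ g (Icc a b)) :
    IsTimelikePieceOn γ (Icc a b) := by
  have hg_contDiff : ContDiff ℝ 1 g := by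
    refine contDiff_one_iff_deriv.2 ⟨fun s => (hg s).differentiableAt, ?_⟩
    rw [show deriv g = fun _ => w from funext fun s => (hg s).deriv]
    exact continuous_const
  refine ⟨hg_contDiff.contDiffOn.congr hγ, fun s hs => ?_⟩
  rwa [((hg s).hasDerivWithinAt.congr_of_mem hγ hs).derivWithin (uniqueDiffOn_Icc hab s hs)]

lemma IsTimelikePieceOn.strictMonoOn_snd_sub_fst {γ : ℝ → ℝ × ℝ} {a b : ℝ}
    (h : IsTimelikePieceOn γ (Icc a b)) :
    StrictMonoOn (fun s => (γ s).2 - (γ s).1) (Icc a b) := by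
  obtain ⟨hγ, hT⟩ := h
  let ℓ := ContinuousLinearMap.snd ℝ ℝ ℝ - ContinuousLinearMap.fst ℝ ℝ ℝ
  refine strictMonoOn_of_hasDerivWithinAt_pos (convex_Icc a b) (ℓ.continuous.comp_continuousOn
    hγ.continuousOn) (fun s hs => ?_) (fun s hs => (hT s (interior_subset hs)).sub_pos)
  have hd := (hγ.differentiableOn one_ne_zero s (interior_subset hs)).hasDerivWithinAt
  exact (ℓ.hasFDerivAt.comp_hasDerivWithinAt s hd).mono interior_subset

lemma Icc_partition_induction {P : Set ℝ → Prop} {m : ℕ} {t : ℕ → ℝ}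
    (ht : ∀ j < m, t j ≤ t (j + 1)) (h₀ : P (Icc (t 0) (t 0)))
    (hglue : ∀ a b c, a ≤ b → b ≤ c → P (Icc a b) → P (Icc b c) → P (Icc a c))
    (hpiece : ∀ j < m, P (Icc (t j) (t (j + 1)))) :
    P (Icc (t 0) (t m)) := by
  suffices ∀ k ≤ m, t 0 ≤ t k ∧ P (Icc (t 0) (t k)) from (this m le_rfl).2
  intro k hk
  induction k with
  | zero => exact ⟨le_rfl, h₀⟩
  | succ k ih =>
    obtain ⟨h0k, hPk⟩ := ih (by omega)
    have hk' := ht k (by omega)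
    exact ⟨h0k.trans hk', hglue _ _ _ h0k hk' hPk (hpiece k (by omega))⟩

namespace IsTimelikeCurveIn

variable {M : Set (ℝ × ℝ)} {γ : ℝ → ℝ × ℝ} {p q : ℝ × ℝ}

lemma continuousOn (h : IsTimelikeCurveIn M γ p q) : ContinuousOn γ (Icc 0 1) := by
  obtain ⟨-, -, -, m, t, -, ht0, htm, ht, hpiece⟩ := h
  rw [← ht0, ← htm]
  refine Icc_partition_induction (P := ContinuousOn γ) (fun j hj => (ht j hj).le)
    (by simp) (fun a b c hab hbc ha hb => ?_) (fun j hj => (hpiece j hj).1.continuousOn)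
  rw [← Icc_union_Icc_eq_Icc hab hbc]
  exact ha.union_of_isClosed hb isClosed_Icc isClosed_Icc

lemma strictMonoOn_snd_sub_fst (h : IsTimelikeCurveIn M γ p q) :
    StrictMonoOn (fun s => (γ s).2 - (γ s).1) (Icc 0 1) := by
  obtain ⟨-, -, -, m, t, -, ht0, htm, ht, hpiece⟩ := h
  rw [← ht0, ← htm]
  refine Icc_partition_induction (P := StrictMonoOn _) (fun j hj => (ht j hj).le)
    (by simp) (fun a b c hab hbc ha hb => ?_)
    (fun j hj => IsTimelikePieceOn.strictMonoOn_snd_sub_fst (hpiece j hj))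
  rw [← Icc_union_Icc_eq_Icc hab hbc]
  exact ha.union hb (isGreatest_Icc hab) (isLeast_Icc hbc)

lemma exists_fst_eq_zero (h : IsTimelikeCurveIn M γ p q) (hp : p.1 < 0) (hq : 0 < q.1) :
    ∃ s ∈ Icc (0 : ℝ) 1, γ s ∈ M ∧ (γ s).1 = 0 ∧ p.2 - p.1 < (γ s).2 ∧ (γ s).2 < q.2 - q.1 := by
  have ⟨hγ0, hγ1, hγM, _⟩ := h
  obtain ⟨s, hs, hs0⟩ := intermediate_value_Icc zero_le_one h.continuousOn.fst
    (show (0 : ℝ) ∈ Icc (γ 0).1 (γ 1).1 by rw [hγ0, hγ1]; exact ⟨hp.le, hq.le⟩)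
  have hs0' : (γ s).1 = 0 := hs0
  have h0s : 0 < s := hs.1.lt_of_ne (by rintro rfl; rw [hγ0] at hs0'; exact hp.ne hs0')
  have hs1 : s < 1 := hs.2.lt_of_ne (by rintro rfl; rw [hγ1] at hs0'; exact hq.ne' hs0')
  have hlo := h.strictMonoOn_snd_sub_fst (left_mem_Icc.2 zero_le_one) hs h0s
  have hhi := h.strictMonoOn_snd_sub_fst hs (right_mem_Icc.2 zero_le_one) hs1
  simp only [hγ0, hγ1, hs0', sub_zero] at hlo hhi
  exact ⟨s, hs, hγM s hs, hs0', hlo, hhi⟩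

end IsTimelikeCurveIn

lemma ofReal_Llen_le_lorDist {M : Set (ℝ × ℝ)} {γ : ℝ → ℝ × ℝ} {p q : ℝ × ℝ}
    (h : IsTimelikeCurveIn M γ p q) : ENNReal.ofReal (Llen γ) ≤ LorDist M p q :=
  le_iSup₂ (f := fun γ (_ : IsTimelikeCurveIn M γ p q) => ENNReal.ofReal (Llen γ)) γ h

lemma lorDist_eq_zero_of_not_exists {M : Set (ℝ × ℝ)} {p q : ℝ × ℝ}
    (h : ¬ ∃ γ, IsTimelikeCurveIn M γ p q) : LorDist M p q = 0 :=
  nonpos_iff_eq_zero.1 (iSup₂_le fun γ hγ => (h ⟨γ, hγ⟩).elim)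

noncomputable def lorentzNorm (v : ℝ × ℝ) : ℝ := √(v.2 ^ 2 - v.1 ^ 2)

lemma Llen_eq_integral_lorentzNorm (γ : ℝ → ℝ × ℝ) :
    Llen γ = ∫ s in (0 : ℝ)..1, lorentzNorm (deriv γ s) := rfl

lemma lorentzNorm_smul {c : ℝ} (hc : 0 ≤ c) (v : ℝ × ℝ) :
    lorentzNorm (c • v) = c * lorentzNorm v := by
  rw [lorentzNorm, lorentzNorm, ← Real.sqrt_sq hc, ← Real.sqrt_mul (sq_nonneg _),
    Real.sqrt_sq hc]
  congr 1
  simp only [Prod.smul_fst, Prod.smul_snd, smul_eq_mul]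
  ring

section lineMap

variable {E : Type*} [NormedAddCommGroup E] [NormedSpace ℝ E] (a b : E) (s : ℝ)

lemma hasDerivAt_lineMap_two_mul :
    HasDerivAt (fun s => lineMap a b (2 * s)) ((2 : ℝ) • (b - a)) s :=
  hasDerivAt_lineMap.scomp s ((hasDerivAt_id s).const_mul 2 |>.congr_deriv (mul_one 2))

lemma hasDerivAt_lineMap_two_mul_sub_one :
    HasDerivAt (fun s => lineMap a b (2 * s - 1)) ((2 : ℝ) • (b - a)) s :=
  hasDerivAt_lineMap.scomp s ((hasDerivAt_id s).const_mul 2 |>.sub_const 1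
    |>.congr_deriv (mul_one 2))

end lineMap

noncomputable def brokenLine (p r q : ℝ × ℝ) (s : ℝ) : ℝ × ℝ :=
  if s ≤ 1 / 2 then lineMap p r (2 * s) else lineMap r q (2 * s - 1)

section brokenLine

variable (p r q : ℝ × ℝ)

lemma brokenLine_eqOn_Icc_zero_half :
    EqOn (brokenLine p r q) (fun s => lineMap p r (2 * s)) (Icc 0 (1 / 2)) :=
  fun _ hs => if_pos hs.2

lemma brokenLine_eqOn_Icc_half_one :
    EqOn (brokenLine p r q) (fun s => lineMap r q (2 * s - 1)) (Icc (1 / 2) 1) := by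
  intro s hs
  rcases hs.1.eq_or_lt with rfl | hs'
  · simp [brokenLine]
  · exact if_neg hs'.not_ge

lemma deriv_brokenLine_of_lt_half {s : ℝ} (hs : s < 1 / 2) :
    deriv (brokenLine p r q) s = (2 : ℝ) • (r - p) := by
  have : brokenLine p r q =ᶠ[𝓝 s] fun s => lineMap p r (2 * s) :=
    eventually_of_mem (Iic_mem_nhds hs) fun _ hx => if_pos hx
  rw [this.deriv_eq, (hasDerivAt_lineMap_two_mul p r s).deriv]

lemma deriv_brokenLine_of_half_lt {s : ℝ} (hs : 1 / 2 < s) :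
    deriv (brokenLine p r q) s = (2 : ℝ) • (q - r) := by
  have : brokenLine p r q =ᶠ[𝓝 s] fun s => lineMap r q (2 * s - 1) :=
    eventually_of_mem (Ioi_mem_nhds hs) fun _ hx => if_neg (not_le.2 hx)
  rw [this.deriv_eq, (hasDerivAt_lineMap_two_mul_sub_one r q s).deriv]

lemma Llen_brokenLine :
    Llen (brokenLine p r q) = lorentzNorm (r - p) + lorentzNorm (q - r) := by
  have h₁ : EqOn (fun s => lorentzNorm (deriv (brokenLine p r q) s))
      (fun _ => 2 * lorentzNorm (r - p)) (Ioo 0 (1 / 2)) := fun s hs => by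
    simp only [deriv_brokenLine_of_lt_half p r q hs.2, lorentzNorm_smul zero_le_two]
  have h₂ : EqOn (fun s => lorentzNorm (deriv (brokenLine p r q) s))
      (fun _ => 2 * lorentzNorm (q - r)) (Ioo (1 / 2) 1) := fun s hs => by
    simp only [deriv_brokenLine_of_half_lt p r q hs.1, lorentzNorm_smul zero_le_two]
  have i₁ : IntervalIntegrable (fun s => lorentzNorm (deriv (brokenLine p r q) s))
      MeasureTheory.volume 0 (1 / 2) :=
    intervalIntegrable_const.congr_uIoo (by rw [uIoo_of_le (by norm_num)]; exact h₁.symm)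
  have i₂ : IntervalIntegrable (fun s => lorentzNorm (deriv (brokenLine p r q) s))
      MeasureTheory.volume (1 / 2) 1 :=
    intervalIntegrable_const.congr_uIoo (by rw [uIoo_of_le (by norm_num)]; exact h₂.symm)
  rw [Llen_eq_integral_lorentzNorm, ← intervalIntegral.integral_add_adjacent_intervals i₁ i₂,
    intervalIntegral.integral_congr_Ioo_of_le (by norm_num) h₁,
    intervalIntegral.integral_congr_Ioo_of_le (by norm_num) h₂]
  simp only [intervalIntegral.integral_const, smul_eq_mul]
  ring

variable {p r q}

lemma isTimelikeCurveIn_brokenLine {M : Set (ℝ × ℝ)} (hpr : FDTimelike (r - p))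
    (hrq : FDTimelike (q - r)) (hMpr : segment ℝ p r ⊆ M) (hMrq : segment ℝ r q ⊆ M) :
    IsTimelikeCurveIn M (brokenLine p r q) p q := by
  refine ⟨by simp [brokenLine], by norm_num [brokenLine], fun s hs => ?_,
    2, fun j => j / 2, two_pos, by simp, by norm_num, fun j _ => by push_cast; linarith,
    fun j hj => ?_⟩
  · rw [segment_eq_image_lineMap] at hMpr hMrq
    by_cases h : s ≤ 1 / 2
    · rw [brokenLine, if_pos h]
      exact hMpr ⟨2 * s, ⟨by linarith [hs.1], by linarith⟩, rfl⟩
    · rw [brokenLine, if_neg h]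
      exact hMrq ⟨2 * s - 1, ⟨by linarith, by linarith [hs.2]⟩, rfl⟩
  · interval_cases j
    · norm_num only [Nat.cast_zero, zero_div, Nat.cast_one]
      exact isTimelikePieceOn_of_eqOn (by norm_num) (hasDerivAt_lineMap_two_mul p r)
        (hpr.smul two_pos) (brokenLine_eqOn_Icc_zero_half p r q)
    · norm_num only [Nat.cast_one, Nat.cast_ofNat, div_self]
      exact isTimelikePieceOn_of_eqOn (by norm_num) (hasDerivAt_lineMap_two_mul_sub_one r q)
        (hrq.smul two_pos) (brokenLine_eqOn_Icc_half_one p r q)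

lemma ofReal_lorentzNorm_add_le_lorDist {M : Set (ℝ × ℝ)} (hpr : FDTimelike (r - p))
    (hrq : FDTimelike (q - r)) (hMpr : segment ℝ p r ⊆ M) (hMrq : segment ℝ r q ⊆ M) :
    ENNReal.ofReal (lorentzNorm (r - p) + lorentzNorm (q - r)) ≤ LorDist M p q :=
  Llen_brokenLine p r q ▸ ofReal_Llen_le_lorDist (isTimelikeCurveIn_brokenLine hpr hrq hMpr hMrq)

end brokenLine

lemma not_exists_isTimelikeCurveIn_Nslit :
    ¬ ∃ γ, IsTimelikeCurveIn Nslit γ ((-1 : ℝ), (-2 : ℝ)) ((1 : ℝ), (2 : ℝ)) := by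
  rintro ⟨γ, hγ⟩
  obtain ⟨s, -, hsN, hs0, hlo, hhi⟩ := hγ.exists_fst_eq_zero (by norm_num) (by norm_num)
  norm_num at hlo hhi
  exact hsN ⟨hs0, hlo.le, hhi.le⟩

lemma two_mul_sqrt_two_le_lorDist_Nslit (p : ℝ × ℝ) (hp : p.2 + |p.1 + 1| < -2) :
    ENNReal.ofReal (2 * √2) ≤ LorDist Nslit p ((1 : ℝ), (2 : ℝ)) := by
  set c := min ((-2 - p.2 - |p.1 + 1|) / 3) 1
  have hc0 : 0 < c := lt_min (by linarith) one_pos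
  have hc1 : c ≤ 1 := min_le_right _ _
  have hcδ : c ≤ (-2 - p.2 - |p.1 + 1|) / 3 := min_le_left _ _
  have hpr : FDTimelike ((c, -1 - c) - p) := by
    show |c - p.1| < -1 - c - p.2
    rw [abs_lt]
    constructor <;> linarith [le_abs_self (p.1 + 1), neg_abs_le (p.1 + 1)]
  have hrq : FDTimelike (((1 : ℝ), (2 : ℝ)) - (c, -1 - c)) := by
    show |1 - c| < 2 - (-1 - c)
    rw [abs_lt]
    constructor <;> linarith
  have hbelow : segment ℝ p (c, -1 - c) ⊆ {z | z.2 < -1} :=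
    (convex_halfSpace_lt (LinearMap.snd ℝ ℝ ℝ).isLinear _).segment_subset
      (show p.2 < -1 by linarith [abs_nonneg (p.1 + 1)]) (show -1 - c < -1 by linarith)
  have hright : segment ℝ (c, -1 - c) ((1 : ℝ), (2 : ℝ)) ⊆ {z | 0 < z.1} :=
    (convex_halfSpace_gt (LinearMap.fst ℝ ℝ ℝ).isLinear _).segment_subset hc0
      (show (0 : ℝ) < 1 from one_pos)
  have hlast : 2 * √2 ≤ lorentzNorm (((1 : ℝ), (2 : ℝ)) - (c, -1 - c)) := by
    refine Real.le_sqrt_of_sq_le ?_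
    simp only [Prod.fst_sub, Prod.snd_sub, mul_pow, Real.sq_sqrt zero_le_two]
    nlinarith
  calc ENNReal.ofReal (2 * √2)
      ≤ ENNReal.ofReal (lorentzNorm ((c, -1 - c) - p) + lorentzNorm ((1, 2) - (c, -1 - c))) :=
        ENNReal.ofReal_le_ofReal (le_add_of_nonneg_of_le (Real.sqrt_nonneg _) hlast)
    _ ≤ LorDist Nslit p (1, 2) :=
        ofReal_lorentzNorm_add_le_lorDist hpr hrq
          (hbelow.trans fun z hz hzN => by linarith [hzN.2.1, hz.out])
          (hright.trans fun z hz hzN => hz.out.ne' hzN.1)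

/-- Example 3.4 transported to the slit plane: there is no timelike curve in `N`
from `(−1,−2)` to `(1,2)`, so `d((−1,−2),(1,2)) = 0`; yet every `p` with
`p₂ + |p₁ + 1| < −2` satisfies `d(p,(1,2)) ≥ 2√2`; consequently `d` is discontinuous at
`((−1,−2),(1,2))`. -/
theorem stmt_12 :
    (¬ ∃ γ : ℝ → ℝ × ℝ, IsTimelikeCurveIn Nslit γ ((-1 : ℝ), (-2 : ℝ)) ((1 : ℝ), (2 : ℝ))) ∧
    LorDist Nslit ((-1 : ℝ), (-2 : ℝ)) ((1 : ℝ), (2 : ℝ)) = 0 ∧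
    (∀ p : ℝ × ℝ, p.2 + |p.1 + 1| < -2 →
      ENNReal.ofReal (2 * Real.sqrt 2) ≤ LorDist Nslit p ((1 : ℝ), (2 : ℝ))) ∧
    ¬ ContinuousWithinAt (fun pq : (ℝ × ℝ) × (ℝ × ℝ) => LorDist Nslit pq.1 pq.2)
        (Nslit ×ˢ Nslit) (((-1 : ℝ), (-2 : ℝ)), ((1 : ℝ), (2 : ℝ))) := by
  have hzero := lorDist_eq_zero_of_not_exists not_exists_isTimelikeCurveIn_Nslit
  refine ⟨not_exists_isTimelikeCurveIn_Nslit, hzero, two_mul_sqrt_two_le_lorDist_Nslit,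
    fun hcont => ?_⟩
  let path : ℝ → (ℝ × ℝ) × (ℝ × ℝ) := fun s => (((-1 : ℝ), -2 - s), ((1 : ℝ), (2 : ℝ)))
  have hpath : Tendsto path (𝓝[>] 0) (𝓝[Nslit ×ˢ Nslit] (((-1 : ℝ), (-2 : ℝ)), (1, 2))) := by
    refine tendsto_nhdsWithin_iff.2 ⟨?_, .of_forall fun s => by simp [path, Nslit]⟩
    have : Continuous path := by fun_prop
    simpa [path] using (this.tendsto 0).mono_left nhdsWithin_le_nhds
  have hbound : ∀ᶠ s in 𝓝[>] (0 : ℝ),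
      ENNReal.ofReal (2 * √2) ≤ LorDist Nslit (path s).1 (path s).2 :=
    eventually_nhdsWithin_of_forall fun s (hs : 0 < s) =>
      two_mul_sqrt_two_le_lorDist_Nslit _ (by simpa [path] using hs)
  have hlim := ge_of_tendsto (hcont.tendsto.comp hpath) hbound
  rw [hzero, nonpos_iff_eq_zero, ENNReal.ofReal_eq_zero] at hlim
  exact hlim.not_gt (by positivity)
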